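/- arXiv:2108.09046 — 3 statements merged into one kernel-verified Lean document; each statement's English description precedes it below -/
import Mathlib

section
/- For every R > 0, the sequence (G_n) converges in C¹([0,R]) to G(x) = √(2x+1) − 1; that is, sup_{x∈[0,R]} |G_n(x) − (√(2x+1) − 1)| → 0 and sup_{x∈[0,R]} |G_n'(x) − 1/√(2x+1)| → 0 as n → ∞. In particular, for every 𝔠 ≥ 0, lim_{n→∞} G_n(𝔠) = √(2𝔠+1) − 1. -/
/-!
The limit `Glim x = √(2x+1) - 1` solves `g' = 1 / (1 + g)`, `g 0 = 0`, i.e. it is a fixed point of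
the map `g ↦ ∫₀ˣ 1 / (1 + g)` that generates the sequence. Since all `G n` and `Glim` are
nonnegative on `[0, ∞)` and `t ↦ 1 / (1 + t)` is `1`-Lipschitz there, induction gives the Picard
estimate `|G (n + 2) x - Glim x| ≤ x ^ (n + 1) / (n + 1)!`. The derivative of `G (n + 3)` is
`1 / (1 + G (n + 2))`, so the same Lipschitz bound controls the derivatives.
-/

/-- The functions `G_j` from the paper: `G_2 ≡ 0` and, for `j ≥ 3`,
`G_j(x) = ∫_0^x dy / (1 + G_{j-1}(y))`. (Values for `j = 0, 1` are irrelevant.) -/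
noncomputable def G : ℕ → ℝ → ℝ
  | 0, _ => 0
  | 1, _ => 0
  | 2, _ => 0
  | j + 3, x => ∫ y in (0:ℝ)..x, 1 / (1 + G (j + 2) y)

open Filter Set Topology MeasureTheory
open scoped Nat

theorem tendstoUniformlyOn_of_abs_sub_le {α : Type*} {F : ℕ → α → ℝ} {f : α → ℝ} {s : Set α}
    {e : ℕ → ℝ} (k : ℕ) (he : Tendsto e atTop (𝓝 0))
    (h : ∀ n, ∀ x ∈ s, |F (n + k) x - f x| ≤ e n) : TendstoUniformlyOn F f atTop s := by
  rw [Metric.tendstoUniformlyOn_iff]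
  intro ε hε
  filter_upwards [(tendsto_sub_atTop_nat k).eventually (he.eventually (gt_mem_nhds hε)),
    eventually_ge_atTop k] with n hn hkn x hx
  obtain ⟨m, rfl⟩ := Nat.exists_eq_add_of_le' hkn
  rw [Nat.add_sub_cancel] at hn
  rw [dist_comm, Real.dist_eq]
  exact (h m x hx).trans_lt hn

theorem abs_one_div_one_add_sub_one_div_one_add_le {a b : ℝ} (ha : 0 ≤ a) (hb : 0 ≤ b) :
    |1 / (1 + a) - 1 / (1 + b)| ≤ |a - b| := by
  rw [div_sub_div _ _ (by positivity) (by positivity), abs_div,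
    abs_of_pos (by positivity : (0 : ℝ) < (1 + a) * (1 + b)), one_mul, mul_one,
    add_sub_add_left_eq_sub, abs_sub_comm]
  exact div_le_self (abs_nonneg _) (by nlinarith)

theorem continuous_one_div_one_add {α : Type*} [TopologicalSpace α] {f : α → ℝ}
    (hf : Continuous f) (h0 : ∀ y, 0 ≤ f y) : Continuous fun y => 1 / (1 + f y) :=
  continuous_const.div (continuous_const.add hf) fun y => by have := h0 y; positivity

theorem integral_pow_div_factorial (n : ℕ) (x : ℝ) :
    ∫ y in (0 : ℝ)..x, y ^ n / n ! = x ^ (n + 1) / (n + 1)! := by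
  rw [intervalIntegral.integral_div, integral_pow, Nat.factorial_succ]
  push_cast
  field_simp
  ring

noncomputable def Glim (x : ℝ) : ℝ := √(2 * x + 1) - 1

theorem one_add_Glim (x : ℝ) : 1 + Glim x = √(2 * x + 1) := add_sub_cancel _ _

theorem Glim_nonneg {x : ℝ} (hx : 0 ≤ x) : 0 ≤ Glim x := by
  rw [Glim, sub_nonneg, Real.one_le_sqrt]
  linarith

theorem Glim_le_self {x : ℝ} (hx : 0 ≤ x) : Glim x ≤ x := by
  rw [Glim, sub_le_iff_le_add, Real.sqrt_le_left (by linarith)]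
  nlinarith

theorem hasDerivAt_Glim {x : ℝ} (hx : 2 * x + 1 ≠ 0) : HasDerivAt Glim (1 / (1 + Glim x)) x := by
  have hsqrt := (Real.hasDerivAt_sqrt hx).comp x (((hasDerivAt_id x).const_mul 2).add_const 1)
  refine (hsqrt.sub_const 1).congr_deriv ?_
  rw [one_add_Glim]
  field_simp

theorem G_nonneg : ∀ (n : ℕ) {x : ℝ}, 0 ≤ x → 0 ≤ G n x
  | 0, _, _ | 1, _, _ | 2, _, _ => le_rfl
  | n + 3, _, hx => intervalIntegral.integral_nonneg hx fun y hy => by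
      have := G_nonneg (n + 2) hy.1
      positivity

/- `G n` may blow up on the negative axis (`G 4 x = log (1 + x)`), so the integrand is clamped to
`[0, ∞)` to make it continuous on all of `ℝ`. -/
theorem G_add_three_eq_integral (n : ℕ) {x : ℝ} (hx : 0 ≤ x) :
    G (n + 3) x = ∫ y in (0 : ℝ)..x, 1 / (1 + G (n + 2) (max y 0)) :=
  intervalIntegral.integral_congr fun y hy => by
    rw [uIcc_of_le hx] at hy
    simp only [max_eq_left hy.1]

theorem continuous_G_max : ∀ n : ℕ, Continuous fun y => G n (max y 0)
  | 0 | 1 | 2 => continuous_const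
  | n + 3 => by
    have hint := continuous_one_div_one_add (continuous_G_max (n + 2))
      fun y => G_nonneg _ (le_max_right y 0)
    have hprim := intervalIntegral.continuous_primitive (μ := volume)
      (fun a b => hint.intervalIntegrable a b) 0
    exact (hprim.comp (continuous_id.max (continuous_const (y := (0 : ℝ))))).congr
      fun y => (G_add_three_eq_integral n (le_max_right y 0)).symm

theorem continuous_one_div_one_add_G_max (n : ℕ) :
    Continuous fun y => 1 / (1 + G n (max y 0)) :=
  continuous_one_div_one_add (continuous_G_max n) fun y => G_nonneg n (le_max_right y 0)

theorem derivWithin_G_add_three (n : ℕ) {x : ℝ} (hx : 0 ≤ x) :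
    derivWithin (G (n + 3)) (Ici 0) x = 1 / (1 + G (n + 2) x) := by
  have hG : EqOn (G (n + 3)) (fun u => ∫ y in (0 : ℝ)..u, 1 / (1 + G (n + 2) (max y 0))) (Ici 0) :=
    fun _ hy => G_add_three_eq_integral n hy
  rw [derivWithin_congr hG (hG hx),
    ((continuous_one_div_one_add_G_max (n + 2)).integral_hasStrictDerivAt 0 x).hasDerivAt
      |>.hasDerivWithinAt.derivWithin (uniqueDiffOn_Ici 0 x hx), max_eq_left hx]

theorem continuousOn_one_div_one_add_Glim : ContinuousOn (fun y => 1 / (1 + Glim y)) (Ici 0) := by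
  refine continuousOn_const.div (continuousOn_const.add ?_) fun y hy => ?_
  · unfold Glim
    fun_prop
  · have := Glim_nonneg (mem_Ici.1 hy)
    positivity

theorem intervalIntegrable_one_div_one_add_Glim {x : ℝ} (hx : 0 ≤ x) :
    IntervalIntegrable (fun y => 1 / (1 + Glim y)) volume 0 x :=
  (continuousOn_one_div_one_add_Glim.mono Icc_subset_Ici_self).intervalIntegrable_of_Icc hx

theorem integral_one_div_one_add_Glim {x : ℝ} (hx : 0 ≤ x) :
    ∫ y in (0 : ℝ)..x, 1 / (1 + Glim y) = Glim x := by
  rw [intervalIntegral.integral_eq_sub_of_hasDerivAt (fun y hy => hasDerivAt_Glim ?_)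
    (intervalIntegrable_one_div_one_add_Glim hx)]
  · simp [Glim]
  · rw [uIcc_of_le hx] at hy
    linarith [hy.1]

theorem abs_G_sub_Glim_le (n : ℕ) {x : ℝ} (hx : 0 ≤ x) :
    |G (n + 2) x - Glim x| ≤ x ^ (n + 1) / (n + 1)! := by
  induction n generalizing x with
  | zero =>
    rw [show G 2 x = 0 from rfl, zero_sub, abs_neg, abs_of_nonneg (Glim_nonneg hx)]
    simpa using Glim_le_self hx
  | succ n ih =>
    rw [G_add_three_eq_integral n hx, ← integral_one_div_one_add_Glim hx,
      ← intervalIntegral.integral_sub ((continuous_one_div_one_add_G_max _).intervalIntegrable _ _)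
        (intervalIntegrable_one_div_one_add_Glim hx), ← integral_pow_div_factorial,
      ← Real.norm_eq_abs]
    refine intervalIntegral.norm_integral_le_of_norm_le hx (.of_forall fun y hy => ?_)
      ((by fun_prop : Continuous fun y : ℝ => y ^ (n + 1) / (n + 1)!).intervalIntegrable _ _)
    rw [max_eq_left hy.1.le]
    exact (abs_one_div_one_add_sub_one_div_one_add_le (G_nonneg _ hy.1.le)
      (Glim_nonneg hy.1.le)).trans (ih hy.1.le)

theorem tendsto_pow_succ_div_factorial (R : ℝ) :
    Tendsto (fun n : ℕ => R ^ (n + 1) / (n + 1)!) atTop (𝓝 0) :=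
  (FloorSemiring.tendsto_pow_div_factorial_atTop R).comp (tendsto_add_atTop_nat 1)

theorem abs_G_sub_Glim_le_of_mem_Icc (n : ℕ) {R x : ℝ} (hx : x ∈ Icc 0 R) :
    |G (n + 2) x - Glim x| ≤ R ^ (n + 1) / (n + 1)! :=
  (abs_G_sub_Glim_le n hx.1).trans (by gcongr; exacts [hx.1, hx.2])

theorem tendstoUniformlyOn_G_Glim (R : ℝ) :
    TendstoUniformlyOn G Glim atTop (Icc 0 R) :=
  tendstoUniformlyOn_of_abs_sub_le 2 (tendsto_pow_succ_div_factorial R)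
    fun n _ hx => abs_G_sub_Glim_le_of_mem_Icc n hx

theorem tendstoUniformlyOn_derivWithin_G (R : ℝ) :
    TendstoUniformlyOn (fun n => derivWithin (G n) (Ici 0)) (fun x => 1 / √(2 * x + 1)) atTop
      (Icc 0 R) :=
  tendstoUniformlyOn_of_abs_sub_le 3 (tendsto_pow_succ_div_factorial R) fun n x hx => by
    rw [derivWithin_G_add_three n hx.1, ← one_add_Glim]
    exact (abs_one_div_one_add_sub_one_div_one_add_le (G_nonneg _ hx.1) (Glim_nonneg hx.1)).trans
      (abs_G_sub_Glim_le_of_mem_Icc n hx)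

theorem stmt2_general (R : ℝ) :
    TendstoUniformlyOn (fun n x => G n x) (fun x => Real.sqrt (2 * x + 1) - 1)
      Filter.atTop (Set.Icc 0 R) ∧
    TendstoUniformlyOn (fun n x => derivWithin (G n) (Set.Ici 0) x)
      (fun x => 1 / Real.sqrt (2 * x + 1)) Filter.atTop (Set.Icc 0 R) ∧
    (∀ c : ℝ, 0 ≤ c →
      Filter.Tendsto (fun n => G n c) Filter.atTop
        (nhds (Real.sqrt (2 * c + 1) - 1))) :=
  ⟨tendstoUniformlyOn_G_Glim R, tendstoUniformlyOn_derivWithin_G R,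
    fun c hc => (tendstoUniformlyOn_G_Glim c).tendsto_at ⟨hc, le_rfl⟩⟩

theorem stmt2 (R : ℝ) (hR : 0 < R) :
    TendstoUniformlyOn (fun n x => G n x) (fun x => Real.sqrt (2 * x + 1) - 1)
      Filter.atTop (Set.Icc 0 R) ∧
    TendstoUniformlyOn (fun n x => derivWithin (G n) (Set.Ici 0) x)
      (fun x => 1 / Real.sqrt (2 * x + 1)) Filter.atTop (Set.Icc 0 R) ∧
    (∀ c : ℝ, 0 ≤ c →
      Filter.Tendsto (fun n => G n c) Filter.atTop
        (nhds (Real.sqrt (2 * c + 1) - 1))) :=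
  stmt2_general R
end

section
/- For all integers m ≥ 2 and all x ≥ 0 the following bounds hold: G^{+,m}_i(x) ≤ x^i/i! for every i ≥ 0; |(G^{+,m}_i)'(x)| ≤ x^{i-1}/(i-1)! for every i ≥ 1; and |(G^{+,m}_i)''(x)| ≤ 2·x^{i-1}/(i-1)! + x^{i-2}/(i-2)! for every i ≥ 2. -/
/-- `G^{+,m}_i(x) = ∫_{Δ_x^i} ∏_{ℓ=0}^{i-1} (1 + G_{m+ℓ}(x_ℓ))^{-2} dx_0 ⋯ dx_{i-1}`,
the integral over the simplex `{0 ≤ x_0 ≤ ⋯ ≤ x_{i-1} ≤ x}`; for `i = 0` it equals `1`. -/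
noncomputable def Gplus (m i : ℕ) (x : ℝ) : ℝ :=
  ∫ v : Fin i → ℝ,
    Set.indicator {v : Fin i → ℝ | Monotone v ∧ ∀ l, v l ∈ Set.Icc 0 x}
      (fun v => ∏ l : Fin i, ((1 + G (m + (l : ℕ)) (v l)) ^ 2)⁻¹) v

open MeasureTheory Set

lemma hasDerivWithinAt_integral_Ici {f : ℝ → ℝ} {a x : ℝ} (hf : ContinuousOn f (Ici a))
    (hx : a ≤ x) : HasDerivWithinAt (fun u => ∫ t in a..u, f t) (f x) (Ici a) x := by
  have hg : Continuous fun t => f (max a t) :=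
    hf.comp_continuous (continuous_const.max continuous_id) fun t => le_max_left a t
  have hfg : ∀ u ∈ Ici a, ∫ t in a..u, f t = ∫ t in a..u, f (max a t) := fun u hu =>
    intervalIntegral.integral_congr fun t ht => by
      rw [uIcc_of_le hu] at ht
      rw [max_eq_right ht.1]
  have := (hg.integral_hasStrictDerivAt a x).hasDerivAt.hasDerivWithinAt (s := Ici a)
  rw [max_eq_right hx] at this
  exact this.congr hfg (hfg x hx)

def simplex (i : ℕ) (x : ℝ) : Set (Fin i → ℝ) := {v | Monotone v ∧ ∀ l, v l ∈ Icc 0 x}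

noncomputable def simplexIntegral (f : ℕ → ℝ → ℝ) (i : ℕ) (x : ℝ) : ℝ :=
  ∫ v : Fin i → ℝ, (simplex i x).indicator (fun v => ∏ l : Fin i, f l (v l)) v

lemma isCompact_simplex (i : ℕ) (x : ℝ) : IsCompact (simplex i x) := by
  have hclosed : IsClosed (simplex i x) := by
    have : simplex i x = (⋂ (a) (b) (_ : a ≤ b), {v : Fin i → ℝ | v a ≤ v b}) ∩
        ⋂ l, (fun v : Fin i → ℝ => v l) ⁻¹' Icc 0 x := by
      ext v; simp [simplex, Monotone]
    rw [this]
    exact (isClosed_iInter fun a => isClosed_iInter fun b => isClosed_iInter fun _ =>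
      isClosed_le (continuous_apply a) (continuous_apply b)).inter
      (isClosed_iInter fun l => isClosed_Icc.preimage (continuous_apply l))
  exact (isCompact_univ_pi fun _ => isCompact_Icc (a := (0 : ℝ)) (b := x)).of_isClosed_subset
    hclosed fun v hv l _ => hv.2 l

lemma snoc_mem_simplex_iff {n : ℕ} {w : Fin n → ℝ} {t x : ℝ} :
    (Fin.snoc w t : Fin (n + 1) → ℝ) ∈ simplex (n + 1) x ↔ t ∈ Icc 0 x ∧ w ∈ simplex n t := by
  constructor
  · rintro ⟨hmono, hmem⟩
    refine ⟨by simpa using hmem (Fin.last n), fun a b hab => ?_, fun l => ⟨?_, ?_⟩⟩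
    · simpa using hmono (Fin.castSucc_le_castSucc_iff.2 hab)
    · simpa using (hmem l.castSucc).1
    · simpa using hmono (Fin.le_last l.castSucc)
  · rintro ⟨ht, hmono, hmem⟩
    refine ⟨fun a b hab => ?_, fun l => ?_⟩
    · induction b using Fin.lastCases with
      | last => induction a using Fin.lastCases with
        | last => exact le_rfl
        | cast a => simpa using (hmem a).2
      | cast b => induction a using Fin.lastCases with
        | last => exact absurd hab (not_le.2 (Fin.castSucc_lt_last b))
        | cast a => simpa using hmono (Fin.castSucc_le_castSucc_iff.1 hab)
    · induction l using Fin.lastCases with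
      | last => simpa using ht
      | cast l => simpa using ⟨(hmem l).1, (hmem l).2.trans ht.2⟩

lemma integral_eq_integral_snoc {n : ℕ} {F : (Fin (n + 1) → ℝ) → ℝ} (hF : Integrable F) :
    ∫ v, F v = ∫ t, ∫ w : Fin n → ℝ, F (Fin.snoc w t) := by
  have hsnoc := (volume_preserving_piFinSuccAbove (fun _ : Fin (n + 1) => ℝ) (Fin.last n)).symm
  have happly : ∀ p : ℝ × (Fin n → ℝ),
      (MeasurableEquiv.piFinSuccAbove (fun _ => ℝ) (Fin.last n)).symm p = Fin.snoc p.2 p.1 := by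
    intro p
    simp [MeasurableEquiv.piFinSuccAbove_symm_apply, Fin.insertNthEquiv, Fin.insertNth_last']
  rw [← hsnoc.integral_comp', Measure.volume_eq_prod, integral_prod]
  · simp only [happly]
  · exact hsnoc.integrable_comp_emb (MeasurableEquiv.measurableEmbedding _) |>.2 hF

section SimplexIntegral

variable {f : ℕ → ℝ → ℝ}

lemma integrable_indicator_simplex (hf : ∀ l, ContinuousOn (f l) (Ici 0)) (i : ℕ) (x : ℝ) :
    Integrable ((simplex i x).indicator fun v : Fin i → ℝ => ∏ l : Fin i, f l (v l)) := by
  refine (integrable_indicator_iff (isCompact_simplex i x).isClosed.measurableSet).2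
    (ContinuousOn.integrableOn_compact (isCompact_simplex i x) ?_)
  exact continuousOn_finsetProd _ fun l _ =>
    (hf l).comp (continuous_apply l).continuousOn fun v hv => (hv.2 l).1

lemma simplexIntegral_zero (x : ℝ) : simplexIntegral f 0 x = 1 := by
  have : simplex 0 x = univ := eq_univ_of_forall fun v => ⟨fun a => a.elim0, fun l => l.elim0⟩
  simp [simplexIntegral, this, measureReal_def, volume_pi]

lemma simplexIntegral_succ (hf : ∀ l, ContinuousOn (f l) (Ici 0)) (n : ℕ) {x : ℝ} (hx : 0 ≤ x) :
    simplexIntegral f (n + 1) x = ∫ t in 0..x, f n t * simplexIntegral f n t := by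
  have hslice : ∀ t (w : Fin n → ℝ),
      (simplex (n + 1) x).indicator (fun v => ∏ l : Fin (n + 1), f l (v l)) (Fin.snoc w t) =
        (Icc 0 x).indicator (f n) t *
          (simplex n t).indicator (fun v => ∏ l : Fin n, f l (v l)) w := by
    intro t w
    by_cases ht : t ∈ Icc 0 x <;> by_cases hw : w ∈ simplex n t <;>
      simp [indicator, snoc_mem_simplex_iff, ht, hw, Fin.prod_univ_castSucc, mul_comm]
  rw [simplexIntegral, integral_eq_integral_snoc (integrable_indicator_simplex hf _ _),
    intervalIntegral.integral_of_le hx, ← integral_Icc_eq_integral_Ioc,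
    ← integral_indicator measurableSet_Icc]
  congr 1 with t
  simp only [hslice, integral_const_mul, simplexIntegral, indicator_mul_left]

lemma hasDerivWithinAt_simplexIntegral_succ (hf : ∀ l, ContinuousOn (f l) (Ici 0)) {n : ℕ}
    (hn : ContinuousOn (simplexIntegral f n) (Ici 0)) {x : ℝ} (hx : 0 ≤ x) :
    HasDerivWithinAt (simplexIntegral f (n + 1)) (f n x * simplexIntegral f n x) (Ici 0) x :=
  (hasDerivWithinAt_integral_Ici ((hf n).mul hn) hx).congr
    (fun _ hy => simplexIntegral_succ hf n hy) (simplexIntegral_succ hf n hx)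

lemma continuousOn_simplexIntegral (hf : ∀ l, ContinuousOn (f l) (Ici 0)) :
    ∀ i, ContinuousOn (simplexIntegral f i) (Ici 0)
  | 0 => continuousOn_const.congr fun _ _ => simplexIntegral_zero _
  | n + 1 => fun _ hx => (hasDerivWithinAt_simplexIntegral_succ hf
      (continuousOn_simplexIntegral hf n) hx).continuousWithinAt

lemma derivWithin_simplexIntegral_succ (hf : ∀ l, ContinuousOn (f l) (Ici 0)) (n : ℕ) {x : ℝ}
    (hx : 0 ≤ x) :
    derivWithin (simplexIntegral f (n + 1)) (Ici 0) x = f n x * simplexIntegral f n x :=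
  (hasDerivWithinAt_simplexIntegral_succ hf (continuousOn_simplexIntegral hf n) hx).derivWithin
    (uniqueDiffOn_Ici 0 x hx)

lemma simplexIntegral_nonneg (hf₀ : ∀ l, ∀ t, 0 ≤ t → 0 ≤ f l t) (i : ℕ) (x : ℝ) :
    0 ≤ simplexIntegral f i x :=
  integral_nonneg <| indicator_nonneg fun _ hv => Finset.prod_nonneg fun l _ => hf₀ l _ (hv.2 l).1

lemma simplexIntegral_le_pow_div_factorial (hf : ∀ l, ContinuousOn (f l) (Ici 0))
    (hf₀ : ∀ l, ∀ t, 0 ≤ t → 0 ≤ f l t) (hf₁ : ∀ l, ∀ t, 0 ≤ t → f l t ≤ 1) :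
    ∀ i {x : ℝ}, 0 ≤ x → simplexIntegral f i x ≤ x ^ i / i.factorial
  | 0, x, _ => by simp [simplexIntegral_zero]
  | n + 1, x, hx => by
    have hle : ∀ t ∈ Icc 0 x, f n t * simplexIntegral f n t ≤ t ^ n / n.factorial := fun t ht =>
      (mul_le_of_le_one_left (simplexIntegral_nonneg hf₀ n t) (hf₁ n t ht.1)).trans
        (simplexIntegral_le_pow_div_factorial hf hf₀ hf₁ n ht.1)
    calc simplexIntegral f (n + 1) x = ∫ t in 0..x, f n t * simplexIntegral f n t :=
          simplexIntegral_succ hf n hx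
      _ ≤ ∫ t in 0..x, t ^ n / n.factorial :=
          intervalIntegral.integral_mono_on hx
            (((hf n).mul (continuousOn_simplexIntegral hf n)).mono Icc_subset_Ici_self
              |>.intervalIntegrable_of_Icc hx)
            ((by fun_prop : Continuous fun t : ℝ => t ^ n / n.factorial).intervalIntegrable _ _) hle
      _ = x ^ (n + 1) / (n + 1).factorial := by
          rw [intervalIntegral.integral_div, integral_pow, Nat.factorial_succ]
          push_cast
          field_simp
          ring

lemma mul_simplexIntegral_le_pow_div_factorial (hf : ∀ l, ContinuousOn (f l) (Ici 0))
    (hf₀ : ∀ l, ∀ t, 0 ≤ t → 0 ≤ f l t) (hf₁ : ∀ l, ∀ t, 0 ≤ t → f l t ≤ 1) (n : ℕ) {x : ℝ}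
    (hx : 0 ≤ x) : f n x * simplexIntegral f n x ≤ x ^ n / n.factorial :=
  (mul_le_of_le_one_left (simplexIntegral_nonneg hf₀ n x) (hf₁ n x hx)).trans
    (simplexIntegral_le_pow_div_factorial hf hf₀ hf₁ n hx)

lemma abs_derivWithin_simplexIntegral_succ_le (hf : ∀ l, ContinuousOn (f l) (Ici 0))
    (hf₀ : ∀ l, ∀ t, 0 ≤ t → 0 ≤ f l t) (hf₁ : ∀ l, ∀ t, 0 ≤ t → f l t ≤ 1) (n : ℕ) {x : ℝ}
    (hx : 0 ≤ x) : |derivWithin (simplexIntegral f (n + 1)) (Ici 0) x| ≤ x ^ n / n.factorial := by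
  rw [derivWithin_simplexIntegral_succ hf n hx,
    abs_of_nonneg (mul_nonneg (hf₀ n x hx) (simplexIntegral_nonneg hf₀ n x))]
  exact mul_simplexIntegral_le_pow_div_factorial hf hf₀ hf₁ n hx

lemma abs_derivWithin_derivWithin_simplexIntegral_le (hf : ∀ l, ContinuousOn (f l) (Ici 0))
    (hf₀ : ∀ l, ∀ t, 0 ≤ t → 0 ≤ f l t) (hf₁ : ∀ l, ∀ t, 0 ≤ t → f l t ≤ 1) (n : ℕ) {x d C : ℝ}
    (hx : 0 ≤ x) (hd : HasDerivWithinAt (f (n + 1)) d (Ici 0) x) (hdC : |d| ≤ C) :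
    |derivWithin (derivWithin (simplexIntegral f (n + 2)) (Ici 0)) (Ici 0) x| ≤
      C * (x ^ (n + 1) / (n + 1).factorial) + x ^ n / n.factorial := by
  have hEq : EqOn (derivWithin (simplexIntegral f (n + 2)) (Ici 0))
      (fun y => f (n + 1) y * simplexIntegral f (n + 1) y) (Ici 0) := fun y hy =>
    derivWithin_simplexIntegral_succ hf (n + 1) hy
  have hprod : HasDerivWithinAt (fun y => f (n + 1) y * simplexIntegral f (n + 1) y)
      (d * simplexIntegral f (n + 1) x + f (n + 1) x * (f n x * simplexIntegral f n x)) (Ici 0) x :=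
    hd.mul (hasDerivWithinAt_simplexIntegral_succ hf (continuousOn_simplexIntegral hf n) hx)
  rw [derivWithin_congr hEq (hEq hx), hprod.derivWithin (uniqueDiffOn_Ici 0 x hx)]
  have hS₁ := simplexIntegral_nonneg hf₀ (n + 1) x
  have hS₀ := simplexIntegral_nonneg hf₀ n x
  have hsecond : f (n + 1) x * (f n x * simplexIntegral f n x) ≤ x ^ n / n.factorial :=
    (mul_le_of_le_one_left (mul_nonneg (hf₀ n x hx) hS₀) (hf₁ (n + 1) x hx)).trans
      (mul_simplexIntegral_le_pow_div_factorial hf hf₀ hf₁ n hx)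
  calc _ ≤ |d| * simplexIntegral f (n + 1) x + f (n + 1) x * (f n x * simplexIntegral f n x) := by
        refine (abs_add_le _ _).trans_eq ?_
        rw [abs_mul, abs_of_nonneg hS₁, abs_of_nonneg
          (mul_nonneg (hf₀ (n + 1) x hx) (mul_nonneg (hf₀ n x hx) hS₀))]
    _ ≤ C * (x ^ (n + 1) / (n + 1).factorial) + x ^ n / n.factorial :=
        add_le_add (mul_le_mul hdC (simplexIntegral_le_pow_div_factorial hf hf₀ hf₁ (n + 1) hx)
          hS₁ ((abs_nonneg d).trans hdC)) hsecond

end SimplexIntegral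

lemma G_add_three (k : ℕ) : G (k + 3) = fun x => ∫ y in 0..x, 1 / (1 + G (k + 2) y) := rfl

lemma hasDerivWithinAt_G_add_three {k : ℕ} (h₀ : ∀ x, 0 ≤ x → 0 ≤ G (k + 2) x)
    (hc : ContinuousOn (G (k + 2)) (Ici 0)) {x : ℝ} (hx : 0 ≤ x) :
    HasDerivWithinAt (G (k + 3)) (1 / (1 + G (k + 2) x)) (Ici 0) x :=
  hasDerivWithinAt_integral_Ici (continuousOn_const.div (continuousOn_const.add hc)
    fun y hy => by linarith [h₀ y hy]) hx

lemma G_nonneg_and_continuousOn :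
    ∀ k, (∀ x, 0 ≤ x → 0 ≤ G (k + 2) x) ∧ ContinuousOn (G (k + 2)) (Ici 0)
  | 0 => ⟨fun _ _ => le_rfl, continuousOn_const (c := (0 : ℝ))⟩
  | k + 1 => by
    obtain ⟨h₀, hc⟩ := G_nonneg_and_continuousOn k
    refine ⟨fun x hx => ?_, fun x hx => (hasDerivWithinAt_G_add_three h₀ hc hx).continuousWithinAt⟩
    rw [show k + 1 + 2 = k + 3 from rfl, G_add_three]
    exact intervalIntegral.integral_nonneg hx fun y hy => by have := h₀ y hy.1; positivity

lemma G_nonneg_s4 {j : ℕ} (hj : 2 ≤ j) {x : ℝ} (hx : 0 ≤ x) : 0 ≤ G j x := by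
  obtain ⟨k, rfl⟩ := Nat.exists_eq_add_of_le' hj
  exact (G_nonneg_and_continuousOn k).1 x hx

lemma continuousOn_G {j : ℕ} (hj : 2 ≤ j) : ContinuousOn (G j) (Ici 0) := by
  obtain ⟨k, rfl⟩ := Nat.exists_eq_add_of_le' hj
  exact (G_nonneg_and_continuousOn k).2

lemma exists_hasDerivWithinAt_G {j : ℕ} (hj : 2 ≤ j) {x : ℝ} (hx : 0 ≤ x) :
    ∃ d ∈ Icc (0 : ℝ) 1, HasDerivWithinAt (G j) d (Ici 0) x := by
  obtain ⟨k, rfl⟩ := Nat.exists_eq_add_of_le' hj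
  cases k with
  | zero => exact ⟨0, ⟨le_rfl, zero_le_one⟩, hasDerivWithinAt_const (c := (0 : ℝ)) x _⟩
  | succ k =>
    obtain ⟨h₀, hc⟩ := G_nonneg_and_continuousOn k
    have hpos : 1 ≤ 1 + G (k + 2) x := le_add_of_nonneg_right (h₀ x hx)
    exact ⟨1 / (1 + G (k + 2) x), ⟨by positivity, (div_le_one₀ (by positivity)).2 hpos⟩,
      hasDerivWithinAt_G_add_three h₀ hc hx⟩

noncomputable def gplusWeight (m l : ℕ) (t : ℝ) : ℝ := ((1 + G (m + l) t) ^ 2)⁻¹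

lemma Gplus_eq_simplexIntegral (m : ℕ) : Gplus m = simplexIntegral (gplusWeight m) := rfl

section GplusWeight

variable {m : ℕ}

lemma continuousOn_gplusWeight (hm : 2 ≤ m) (l : ℕ) : ContinuousOn (gplusWeight m l) (Ici 0) :=
  ((continuousOn_const.add (continuousOn_G (by omega))).pow 2).inv₀ fun t ht =>
    pow_ne_zero 2 (show 1 + G (m + l) t ≠ 0 by linarith [G_nonneg_s4 (j := m + l) (by omega) ht])

lemma gplusWeight_nonneg (l : ℕ) (t : ℝ) : 0 ≤ gplusWeight m l t := by
  unfold gplusWeight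
  positivity

lemma gplusWeight_le_one (hm : 2 ≤ m) (l : ℕ) {t : ℝ} (ht : 0 ≤ t) : gplusWeight m l t ≤ 1 :=
  inv_le_one_of_one_le₀ (one_le_pow₀ (le_add_of_nonneg_right (G_nonneg_s4 (by omega) ht)))

lemma exists_hasDerivWithinAt_gplusWeight (hm : 2 ≤ m) (l : ℕ) {x : ℝ} (hx : 0 ≤ x) :
    ∃ d, |d| ≤ 2 ∧ HasDerivWithinAt (gplusWeight m l) d (Ici 0) x := by
  obtain ⟨g, ⟨hg₀, hg₁⟩, hG⟩ := exists_hasDerivWithinAt_G (j := m + l) (by omega) hx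
  have hu : 1 ≤ 1 + G (m + l) x := le_add_of_nonneg_right (G_nonneg_s4 (by omega) hx)
  refine ⟨_, ?_, ((hG.const_add 1).pow 2).inv (pow_ne_zero 2 (by linarith))⟩
  set u := 1 + G (m + l) x
  have hu₄ : u ≤ (u ^ 2) ^ 2 := by
    rw [← pow_mul]
    exact le_self_pow₀ hu (by norm_num)
  simp only [Pi.pow_apply]
  rw [abs_div, abs_neg, abs_of_nonneg (by positivity), abs_of_nonneg (by positivity),
    div_le_iff₀ (by positivity)]
  norm_num
  nlinarith [mul_le_mul_of_nonneg_left hg₁ (by positivity : 0 ≤ 2 * u)]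

end GplusWeight

theorem stmt4 (m : ℕ) (hm : 2 ≤ m) (x : ℝ) (hx : 0 ≤ x) :
    (∀ i : ℕ, Gplus m i x ≤ x ^ i / (Nat.factorial i : ℝ)) ∧
    (∀ i : ℕ, 1 ≤ i →
      |derivWithin (Gplus m i) (Set.Ici 0) x| ≤
        x ^ (i - 1) / (Nat.factorial (i - 1) : ℝ)) ∧
    (∀ i : ℕ, 2 ≤ i →
      |derivWithin (derivWithin (Gplus m i) (Set.Ici 0)) (Set.Ici 0) x| ≤
        2 * x ^ (i - 1) / (Nat.factorial (i - 1) : ℝ) +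
          x ^ (i - 2) / (Nat.factorial (i - 2) : ℝ)) := by
  have hf := continuousOn_gplusWeight hm
  have hf₀ : ∀ l t, 0 ≤ t → 0 ≤ gplusWeight m l t := fun l t _ => gplusWeight_nonneg l t
  have hf₁ : ∀ l t, 0 ≤ t → gplusWeight m l t ≤ 1 := fun l _ ht => gplusWeight_le_one hm l ht
  rw [Gplus_eq_simplexIntegral]
  refine ⟨fun i => simplexIntegral_le_pow_div_factorial hf hf₀ hf₁ i hx, fun i hi => ?_,
    fun i hi => ?_⟩
  · obtain ⟨n, rfl⟩ := Nat.exists_eq_add_of_le' hi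
    exact abs_derivWithin_simplexIntegral_succ_le hf hf₀ hf₁ n hx
  · obtain ⟨n, rfl⟩ := Nat.exists_eq_add_of_le' hi
    obtain ⟨d, hd₂, hd⟩ := exists_hasDerivWithinAt_gplusWeight hm (n + 1) hx
    rw [mul_div_assoc]
    exact abs_derivWithin_derivWithin_simplexIntegral_le hf hf₀ hf₁ n hx hd hd₂
end

section
/- Let c > 0, C₀ > 0, A ∈ ℝ, and let (x^N)_{N∈ℕ} be a sequence of continuous functions from [0,∞) to ℝ such that for all N and all s, t ≥ 0: 0 ≤ x^N(t) ≤ c·t, and |x^N(t) − x^N(s)| ≤ C₀·(|t−s| + |t−s|^{1/2}·(max(t,s))^{1/2}). Suppose that for every μ > 0, lim_{N→∞} ∫_0^∞ e^{−μt} x^N(t) dt = A/μ². Then for every t ≥ 0, lim_{N→∞} x^N(t) = A·t. -/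
/-!
Put `g_N(s) = x^N(s) - A s`: its Laplace transforms tend to `0` and `|g_N(s)| ≤ (c + |A|) s`.
By linearity, `∫ Φ(e^{-s}) e^{-s} g_N(s) ds → 0` for every polynomial `Φ`, hence, by Weierstrass
approximation on `[0, 1]`, for every continuous `Φ`. With `Φ(u) = ψ(-log u) / u` this says
`∫ ψ g_N → 0` for every continuous `ψ` vanishing near `∞`. Taking for `ψ` a bump of unit mass
supported near `t`, the common modulus of continuity of the `g_N` at `t` gives `g_N(t) → 0`.
-/

open MeasureTheory Real Set Filter Polynomial Topology

lemma integrableOn_exp_neg_mul_mul_self {μ : ℝ} (hμ : 0 < μ) :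
    IntegrableOn (fun s => exp (-μ * s) * s) (Ioi 0) := by
  refine (integrableOn_rpow_mul_exp_neg_mul_rpow (p := 1) (s := 1) (b := μ)
    (by norm_num) zero_lt_one hμ).congr_fun (fun s _ => ?_) measurableSet_Ioi
  simp only [rpow_one]
  ring

lemma integral_exp_neg_mul_mul_self {μ : ℝ} (hμ : 0 < μ) :
    ∫ s in Ioi 0, exp (-μ * s) * s = 1 / μ ^ 2 := by
  have h := integral_rpow_mul_exp_neg_mul_Ioi (a := 2) (r := μ) (by norm_num) hμ
  norm_num [Gamma_two] at h
  rw [one_div, ← h]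
  refine setIntegral_congr_fun measurableSet_Ioi (fun s _ => ?_)
  ring_nf

lemma integrableOn_Ioi_of_abs_le_mul_exp_neg_mul {f : ℝ → ℝ} {μ K : ℝ} (hμ : 0 < μ)
    (hf : AEStronglyMeasurable f (volume.restrict (Ioi 0)))
    (hfK : ∀ s, 0 < s → |f s| ≤ K * (exp (-μ * s) * s)) :
    IntegrableOn f (Ioi 0) :=
  ((integrableOn_exp_neg_mul_mul_self hμ).const_mul K).mono' hf <|
    (ae_restrict_iff' measurableSet_Ioi).2 (Eventually.of_forall hfK)

lemma integrableOn_exp_neg_mul_mul_of_abs_le {f : ℝ → ℝ} {μ K : ℝ} (hμ : 0 < μ)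
    (hf : AEStronglyMeasurable f (volume.restrict (Ioi 0))) (hfK : ∀ s, 0 < s → |f s| ≤ K * s) :
    IntegrableOn (fun s => exp (-μ * s) * f s) (Ioi 0) :=
  integrableOn_Ioi_of_abs_le_mul_exp_neg_mul hμ ((by fun_prop : Continuous fun s =>
    exp (-μ * s)).aestronglyMeasurable.mul hf) fun s hs => by
      rw [abs_mul, abs_of_pos (exp_pos _)]
      nlinarith [exp_pos (-μ * s), hfK s hs]

lemma exp_neg_mem_Icc {s : ℝ} (hs : 0 ≤ s) : exp (-s) ∈ Icc (0 : ℝ) 1 :=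
  ⟨(exp_pos _).le, exp_le_one_iff.2 (neg_nonpos.2 hs)⟩

lemma abs_comp_exp_neg_mul_le {Φ : ℝ → ℝ} {C K s y : ℝ} (hΦ : ∀ u ∈ Icc (0 : ℝ) 1, |Φ u| ≤ C)
    (hs : 0 ≤ s) (hy : |y| ≤ K * s) :
    |Φ (exp (-s)) * exp (-s) * y| ≤ C * K * (exp (-1 * s) * s) := by
  have hΦs := hΦ _ (exp_neg_mem_Icc hs)
  rw [abs_mul, abs_mul, abs_of_pos (exp_pos _), neg_one_mul]
  calc |Φ (exp (-s))| * exp (-s) * |y| ≤ C * exp (-s) * (K * s) :=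
        mul_le_mul (mul_le_mul_of_nonneg_right hΦs (exp_pos _).le) hy (abs_nonneg _)
          (mul_nonneg ((abs_nonneg _).trans hΦs) (exp_pos _).le)
    _ = C * K * (exp (-s) * s) := by ring

lemma integrableOn_comp_exp_neg_mul {f : ℝ → ℝ} {K : ℝ}
    (hf : AEStronglyMeasurable f (volume.restrict (Ioi 0))) (hfK : ∀ s, 0 < s → |f s| ≤ K * s)
    {Φ : ℝ → ℝ} (hΦ : ContinuousOn Φ (Icc 0 1)) :
    IntegrableOn (fun s => Φ (exp (-s)) * exp (-s) * f s) (Ioi 0) := by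
  obtain ⟨C, hC⟩ := isCompact_Icc.exists_bound_of_continuousOn hΦ
  have hmeas : AEStronglyMeasurable (fun s => Φ (exp (-s)) * exp (-s)) (volume.restrict (Ioi 0)) :=
    ((hΦ.comp (by fun_prop) fun s hs => exp_neg_mem_Icc (le_of_lt hs)).mul
      (by fun_prop)).aestronglyMeasurable measurableSet_Ioi
  exact integrableOn_Ioi_of_abs_le_mul_exp_neg_mul one_pos (hmeas.mul hf) fun s hs =>
    abs_comp_exp_neg_mul_le (fun u hu => by simpa using hC u hu) hs.le (hfK s hs)

lemma abs_integral_comp_exp_neg_mul_le {f : ℝ → ℝ} {K : ℝ} (hfK : ∀ s, 0 < s → |f s| ≤ K * s)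
    {Φ : ℝ → ℝ} {η : ℝ} (hΦ : ∀ u ∈ Icc (0 : ℝ) 1, |Φ u| ≤ η) :
    |∫ s in Ioi 0, Φ (exp (-s)) * exp (-s) * f s| ≤ η * K :=
  calc |∫ s in Ioi 0, Φ (exp (-s)) * exp (-s) * f s|
      ≤ ∫ s in Ioi 0, η * K * (exp (-1 * s) * s) := by
        rw [← Real.norm_eq_abs]
        exact norm_integral_le_of_norm_le ((integrableOn_exp_neg_mul_mul_self one_pos).const_mul _)
          ((ae_restrict_iff' measurableSet_Ioi).2 (Eventually.of_forall fun s hs =>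
            abs_comp_exp_neg_mul_le hΦ (le_of_lt hs) (hfK s hs)))
    _ = η * K := by rw [integral_const_mul, integral_exp_neg_mul_mul_self one_pos]; ring

lemma abs_sub_mul_le_add_abs_mul {y c A s : ℝ} (hs : 0 ≤ s) (hy : |y| ≤ c * s) :
    |y - A * s| ≤ (c + |A|) * s :=
  calc |y - A * s| ≤ |y| + |A * s| := abs_sub _ _
    _ ≤ (c + |A|) * s := by rw [abs_mul, abs_of_nonneg hs]; linarith

lemma abs_integral_mul_sub_le {α : Type*} [MeasurableSpace α] {μ : Measure α} {ψ g : α → ℝ}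
    {a : α} {ε : ℝ} (hψ : 0 ≤ ψ) (hψi : Integrable ψ μ) (hψ1 : ∫ x, ψ x ∂μ = 1)
    (hψg : Integrable (fun x => ψ x * g x) μ) (hg : ∀ x, ψ x ≠ 0 → |g x - g a| ≤ ε) :
    |∫ x, ψ x * g x ∂μ - g a| ≤ ε := by
  have hga : g a = ∫ x, ψ x * g a ∂μ := by rw [integral_mul_const, hψ1, one_mul]
  have hpt : ∀ x, ‖ψ x * g x - ψ x * g a‖ ≤ ψ x * ε := fun x => by
    rw [← mul_sub, norm_mul, Real.norm_of_nonneg (hψ x), Real.norm_eq_abs]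
    rcases eq_or_ne (ψ x) 0 with h | h
    · simp [h]
    · exact mul_le_mul_of_nonneg_left (hg x h) (hψ x)
  calc |∫ x, ψ x * g x ∂μ - g a|
      = ‖∫ x, (ψ x * g x - ψ x * g a) ∂μ‖ := by
        rw [integral_sub hψg (hψi.mul_const _), ← hga, Real.norm_eq_abs]
    _ ≤ ∫ x, ψ x * ε ∂μ := norm_integral_le_of_norm_le (hψi.mul_const ε) (ae_of_all _ hpt)
    _ = ε := by rw [integral_mul_const, hψ1, one_mul]

-- With `log 0 = 0` and `x / 0 = 0` the value at `u = 0` is `0`, and the function vanishes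
-- for `|u| < exp (-T)` anyway.
lemma continuous_comp_neg_log_div {ψ : ℝ → ℝ} {T : ℝ} (hψ : Continuous ψ)
    (hψT : ∀ s, T ≤ s → ψ s = 0) : Continuous fun u => ψ (-log u) / u := by
  rw [continuous_iff_continuousAt]
  intro u
  rcases eq_or_ne u 0 with rfl | hu
  · have hzero : (fun u => ψ (-log u) / u) =ᶠ[𝓝 0] fun _ => 0 := by
      filter_upwards [Metric.ball_mem_nhds (0 : ℝ) (exp_pos (-T))] with v hv
      rcases eq_or_ne v 0 with rfl | hv0
      · simp
      have hlog : log v < -T := by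
        rw [← log_abs, log_lt_iff_lt_exp (abs_pos.2 hv0)]
        simpa using hv
      rw [hψT _ (by linarith), zero_div]
    exact continuousAt_const.congr hzero.symm
  · exact (hψ.continuousAt.comp (continuousAt_log hu).neg).div continuousAt_id hu

lemma comp_neg_log_div_exp_neg_mul (ψ : ℝ → ℝ) (s : ℝ) :
    ψ (-log (exp (-s))) / exp (-s) * exp (-s) = ψ s := by
  rw [log_exp, neg_neg, div_mul_cancel₀ _ (exp_pos _).ne']

lemma exists_bump_integral_Ioi_eq_one {t₀ δ : ℝ} (hδ : 0 < δ) (hδt₀ : δ ≤ t₀) :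
    ∃ ψ : ℝ → ℝ, Continuous ψ ∧ 0 ≤ ψ ∧ Function.support ψ ⊆ Metric.ball t₀ δ ∧
      IntegrableOn ψ (Ioi 0) ∧ ∫ s in Ioi 0, ψ s = 1 := by
  let φ : ContDiffBump t₀ := ⟨δ / 2, δ, half_pos hδ, half_lt_self hδ⟩
  have hsupp : Function.support (φ.normed volume) ⊆ Metric.ball t₀ δ := φ.support_normed_eq.le
  refine ⟨φ.normed volume, φ.continuous_normed, φ.nonneg_normed, hsupp,
    φ.integrable_normed.integrableOn, ?_⟩
  rw [setIntegral_eq_integral_of_forall_compl_eq_zero fun s hs => ?_, φ.integral_normed]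
  refine Function.notMem_support.1 fun h => hs ?_
  have := Metric.mem_ball.1 (hsupp h)
  rw [Real.dist_eq, abs_sub_lt_iff] at this
  exact mem_Ioi.2 (by linarith)

section LaplaceVanishing

variable {ι : Type*} {l : Filter ι} {g : ι → ℝ → ℝ} {K : ℝ}
  (hg : ∀ i, AEStronglyMeasurable (g i) (volume.restrict (Ioi 0)))
  (hgK : ∀ i s, 0 < s → |g i s| ≤ K * s)
  (hL : ∀ μ, 0 < μ → Tendsto (fun i => ∫ s in Ioi 0, exp (-μ * s) * g i s) l (𝓝 0))
include hg hgK hL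

lemma tendsto_integral_polynomial_exp_neg_mul (p : ℝ[X]) :
    Tendsto (fun i => ∫ s in Ioi 0, p.eval (exp (-s)) * exp (-s) * g i s) l (𝓝 0) := by
  induction p using Polynomial.induction_on' with
  | add p q hp hq =>
    have hint := fun (r : ℝ[X]) i => integrableOn_comp_exp_neg_mul (hg i) (hgK i)
      (Φ := fun u => r.eval u) (Polynomial.continuousOn _)
    simpa [add_mul, integral_add (hint p _) (hint q _)] using hp.add hq
  | monomial n a =>
    have hexp : ∀ s : ℝ, exp (-s) ^ n * exp (-s) = exp (-(n + 1 : ℝ) * s) := fun s => by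
      rw [← exp_nat_mul, ← exp_add]; ring_nf
    simpa [mul_assoc, hexp, integral_const_mul] using (hL (n + 1) (by positivity)).const_mul a

-- Weierstrass: `Φ` is within `η` of a polynomial on `[0, 1]`, and since `|g i s| ≤ K * s` this
-- changes the integrals by at most `η * K`, uniformly in `i`.
lemma tendsto_integral_comp_exp_neg_mul {Φ : ℝ → ℝ} (hΦ : ContinuousOn Φ (Icc 0 1)) :
    Tendsto (fun i => ∫ s in Ioi 0, Φ (exp (-s)) * exp (-s) * g i s) l (𝓝 0) := by
  rw [Metric.tendsto_nhds]
  intro ε hε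
  obtain ⟨η, hη, hηK⟩ := exists_pos_mul_lt (half_pos hε) K
  obtain ⟨p, hp⟩ := exists_polynomial_near_of_continuousOn 0 1 Φ hΦ η hη
  filter_upwards [Metric.tendsto_nhds.1 (tendsto_integral_polynomial_exp_neg_mul hg hgK hL p)
    (ε / 2) (half_pos hε)] with i hi
  have happrox : |∫ s in Ioi 0, (Φ (exp (-s)) - p.eval (exp (-s))) * exp (-s) * g i s| ≤ η * K :=
    abs_integral_comp_exp_neg_mul_le (Φ := fun u => Φ u - p.eval u) (hgK i)
      fun u hu => by rw [abs_sub_comm]; exact (hp u hu).le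
  simp only [sub_mul] at happrox
  rw [integral_sub (integrableOn_comp_exp_neg_mul (hg i) (hgK i) hΦ)
    (integrableOn_comp_exp_neg_mul (hg i) (hgK i) (Polynomial.continuousOn p))] at happrox
  rw [Real.dist_eq, sub_zero] at hi ⊢
  linarith [abs_sub_abs_le_abs_sub (∫ s in Ioi 0, Φ (exp (-s)) * exp (-s) * g i s)
    (∫ s in Ioi 0, p.eval (exp (-s)) * exp (-s) * g i s)]

lemma tendsto_integral_mul_of_continuous_of_eq_zero {ψ : ℝ → ℝ} {T : ℝ} (hψ : Continuous ψ)
    (hψT : ∀ s, T ≤ s → ψ s = 0) :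
    Tendsto (fun i => ∫ s in Ioi 0, ψ s * g i s) l (𝓝 0) := by
  simpa only [comp_neg_log_div_exp_neg_mul] using
    tendsto_integral_comp_exp_neg_mul hg hgK hL (continuous_comp_neg_log_div hψ hψT).continuousOn

lemma tendsto_apply_of_laplace_tendsto_zero {t₀ : ℝ} (ht₀ : 0 < t₀)
    (hequi : EquicontinuousAt g t₀) :
    Tendsto (fun i => g i t₀) l (𝓝 0) := by
  rw [Metric.tendsto_nhds]
  intro ε hε
  obtain ⟨δ, hδ, hgδ⟩ := Metric.equicontinuousAt_iff.1 hequi (ε / 2) (half_pos hε)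
  obtain ⟨ψ, hψc, hψ0, hψsupp, hψi, hψ1⟩ :=
    exists_bump_integral_Ioi_eq_one (lt_min hδ ht₀) (min_le_right δ t₀)
  have hψT : ∀ s, t₀ + δ ≤ s → ψ s = 0 := fun s hs => Function.notMem_support.1 fun h => by
    have := Metric.mem_ball.1 (hψsupp h)
    rw [Real.dist_eq, abs_sub_lt_iff] at this
    linarith [min_le_left δ t₀]
  have hψg : ∀ i, IntegrableOn (fun s => ψ s * g i s) (Ioi 0) := fun i => by
    simpa only [comp_neg_log_div_exp_neg_mul] using integrableOn_comp_exp_neg_mul (hg i) (hgK i)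
      (continuous_comp_neg_log_div hψc hψT).continuousOn
  filter_upwards [Metric.tendsto_nhds.1 (tendsto_integral_mul_of_continuous_of_eq_zero hg hgK hL
    hψc hψT) (ε / 2) (half_pos hε)] with i hi
  have hmean : |(∫ s in Ioi 0, ψ s * g i s) - g i t₀| ≤ ε / 2 :=
    abs_integral_mul_sub_le hψ0 hψi hψ1 (hψg i) fun s hs => by
      rw [← Real.dist_eq, dist_comm]
      exact (hgδ s ((Metric.mem_ball.1 (hψsupp hs)).trans_le (min_le_left δ t₀)) i).le
  rw [abs_sub_comm] at hmean
  rw [Real.dist_eq, sub_zero] at hi ⊢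
  linarith [abs_sub_abs_le_abs_sub (g i t₀) (∫ s in Ioi 0, ψ s * g i s)]

end LaplaceVanishing

section Sequence

variable {ι : Type*} {l : Filter ι} {x : ι → ℝ → ℝ} {A : ℝ}

lemma tendsto_integral_exp_neg_mul_sub_mul {μ : ℝ} (hμ : 0 < μ)
    (hx : ∀ i, IntegrableOn (fun s => exp (-μ * s) * x i s) (Ioi 0))
    (hlap : Tendsto (fun i => ∫ s in Ioi 0, exp (-μ * s) * x i s) l (𝓝 (A / μ ^ 2))) :
    Tendsto (fun i => ∫ s in Ioi 0, exp (-μ * s) * (x i s - A * s)) l (𝓝 0) := by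
  have hA : IntegrableOn (fun s => exp (-μ * s) * (A * s)) (Ioi 0) :=
    IntegrableOn.congr_fun ((integrableOn_exp_neg_mul_mul_self hμ).const_mul A)
      (fun s _ => by ring) measurableSet_Ioi
  have hsplit : ∀ i, ∫ s in Ioi 0, exp (-μ * s) * (x i s - A * s)
      = (∫ s in Ioi 0, exp (-μ * s) * x i s) - A / μ ^ 2 := fun i => by
    simp only [mul_sub]
    rw [integral_sub (hx i) hA]
    simp only [mul_left_comm _ A, integral_const_mul, integral_exp_neg_mul_mul_self hμ]
    ring
  have h := hlap.sub_const (A / μ ^ 2)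
  rw [sub_self] at h
  simpa only [hsplit] using h

lemma equicontinuousAt_sub_mul {C₀ t₀ : ℝ} (ht₀ : 0 < t₀)
    (hmod : ∀ i, ∀ s t : ℝ, 0 ≤ s → 0 ≤ t →
      |x i t - x i s| ≤ C₀ * (|t - s| + √|t - s| * √(max t s))) :
    EquicontinuousAt (fun i s => x i s - A * s) t₀ := by
  refine Metric.equicontinuousAt_of_continuity_modulus
    (fun s => C₀ * (|s - t₀| + √|s - t₀| * √(max s t₀)) + |A| * |s - t₀|) ?_ _ ?_
  · have hb : Continuous fun s =>
        C₀ * (|s - t₀| + √|s - t₀| * √(max s t₀)) + |A| * |s - t₀| := by fun_prop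
    simpa using hb.tendsto t₀
  · filter_upwards [Ioi_mem_nhds ht₀] with s hs i
    have hxs := hmod i t₀ s ht₀.le (le_of_lt hs)
    rw [Real.dist_eq, abs_sub_comm]
    calc |x i s - A * s - (x i t₀ - A * t₀)| = |(x i s - x i t₀) - A * (s - t₀)| := by ring_nf
      _ ≤ |x i s - x i t₀| + |A * (s - t₀)| := abs_sub _ _
      _ ≤ _ := by rw [abs_mul]; linarith

end Sequence

theorem stmt18_general (c C₀ A : ℝ) (x : ℕ → ℝ → ℝ)
    (hcont : ∀ N, ContinuousOn (x N) (Set.Ici 0))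
    (hbd : ∀ N, ∀ t : ℝ, 0 ≤ t → 0 ≤ x N t ∧ x N t ≤ c * t)
    (hmod : ∀ N, ∀ s t : ℝ, 0 ≤ s → 0 ≤ t →
      |x N t - x N s| ≤
        C₀ * (|t - s| + Real.sqrt |t - s| * Real.sqrt (max t s)))
    (hlap : ∀ μ : ℝ, 0 < μ →
      Filter.Tendsto
        (fun N => ∫ t in Set.Ioi (0:ℝ), Real.exp (-μ * t) * x N t)
        Filter.atTop (nhds (A / μ ^ 2))) :
    ∀ t : ℝ, 0 ≤ t →
      Filter.Tendsto (fun N => x N t) Filter.atTop (nhds (A * t)) := by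
  intro t ht
  rcases ht.eq_or_lt with rfl | ht
  · have hx0 : ∀ N, x N 0 = 0 := fun N =>
      le_antisymm (by simpa using (hbd N 0 le_rfl).2) (hbd N 0 le_rfl).1
    simp [hx0]
  have hmeas : ∀ N, AEStronglyMeasurable (x N) (volume.restrict (Ioi 0)) := fun N =>
    ((hcont N).mono Ioi_subset_Ici_self).aestronglyMeasurable measurableSet_Ioi
  have hxK : ∀ N s, 0 < s → |x N s| ≤ c * s := fun N s hs => by
    rw [abs_of_nonneg (hbd N s hs.le).1]
    exact (hbd N s hs.le).2
  have hL : ∀ μ, 0 < μ → Tendsto (fun N => ∫ s in Ioi 0, exp (-μ * s) * (x N s - A * s))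
      atTop (𝓝 0) := fun μ hμ => tendsto_integral_exp_neg_mul_sub_mul hμ
    (fun N => integrableOn_exp_neg_mul_mul_of_abs_le hμ (hmeas N) (hxK N)) (hlap μ hμ)
  simpa using (tendsto_apply_of_laplace_tendsto_zero (fun N => (hmeas N).sub (by fun_prop))
    (fun N s hs => abs_sub_mul_le_add_abs_mul hs.le (hxK N s hs)) hL ht
    (equicontinuousAt_sub_mul ht hmod)).add_const (A * t)

theorem stmt18 (c C₀ A : ℝ) (hc : 0 < c) (hC₀ : 0 < C₀) (x : ℕ → ℝ → ℝ)
    (hcont : ∀ N, ContinuousOn (x N) (Set.Ici 0))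
    (hbd : ∀ N, ∀ t : ℝ, 0 ≤ t → 0 ≤ x N t ∧ x N t ≤ c * t)
    (hmod : ∀ N, ∀ s t : ℝ, 0 ≤ s → 0 ≤ t →
      |x N t - x N s| ≤
        C₀ * (|t - s| + Real.sqrt |t - s| * Real.sqrt (max t s)))
    (hlap : ∀ μ : ℝ, 0 < μ →
      Filter.Tendsto
        (fun N => ∫ t in Set.Ioi (0:ℝ), Real.exp (-μ * t) * x N t)
        Filter.atTop (nhds (A / μ ^ 2))) :
    ∀ t : ℝ, 0 ≤ t →
      Filter.Tendsto (fun N => x N t) Filter.atTop (nhds (A * t)) :=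
  stmt18_general c C₀ A x hcont hbd hmod hlap
end
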